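/- arXiv:1507.04770 — 9 statements merged into one kernel-verified Lean document; each statement's English description precedes it below -/
import Mathlib

section
/- Let n ≥ p ≥ r be non-negative integers and K a field. If S is a linear subspace of the space of n×p matrices over K in which every matrix has rank at most r, then dim S ≤ n·r. -/
/-!
Order the cells of a matrix column by column. Every nonzero matrix has a first nonzero cell, and
restricting `S` to the set `L` of cells that are first nonzero cells of members of `S` is
injective, so `dim S ≤ |L|`. If `L` contains `k` cells in distinct rows and columns, some
combination of members of `S` whose first nonzero cells are these has an invertible `k × k`
submatrix on them (its coefficients can be chosen one column at a time, which works over any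
field), so `k ≤ r`. By König's theorem `L` is then covered by `a` rows and `b` columns with
`a + b ≤ r`, whence `|L| ≤ a p + b n ≤ n r`.
-/

open Finset Function Module

namespace Matrix

section Determinant

variable {R : Type*} [CommRing R]

theorem exists_det_updateCol_add_smul_ne_zero {ι : Type*} [Fintype ι] [DecidableEq ι]
    {A : Matrix ι ι R} (hA : A.det ≠ 0) (j : ι) (v : ι → R) :
    ∃ μ : R, (A.updateCol j (v + μ • fun a => A a j)).det ≠ 0 := by
  have hdet : ∀ μ : R, (A.updateCol j (v + μ • fun a => A a j)).det
      = (A.updateCol j v).det + μ * A.det := by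
    intro μ
    rw [det_updateCol_add, det_updateCol_smul, updateCol_eq_self]
  by_cases hv : (A.updateCol j v).det = 0
  · exact ⟨1, by rwa [hdet, hv, zero_add, one_mul]⟩
  · exact ⟨0, by simpa [hdet] using hv⟩

theorem det_ne_zero_of_blockTriangular [IsDomain R] {k : ℕ} {α : Type*} [LinearOrder α]
    {B : Matrix (Fin k) (Fin k) R} {v : Fin k → α} (hv : Injective v) (hB : B.BlockTriangular v)
    (hdiag : ∀ a, B a a ≠ 0) : B.det ≠ 0 := by
  set σ := Tuple.sort v
  have hσ : StrictMono (v ∘ σ) :=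
    (Tuple.monotone_sort v).strictMono_of_injective (hv.comp σ.injective)
  have htri : (B.submatrix σ σ).IsUpperTriangular := fun a b hab => hB (hσ hab)
  rw [← det_submatrix_equiv_self σ, det_of_isUpperTriangular htri]
  exact prod_ne_zero_iff.2 fun a _ => hdiag (σ a)

variable {k : ℕ} (Y : Fin k → Matrix (Fin k) (Fin k) R)

def mixedCols (c : Fin k → R) (j : ℕ) : Matrix (Fin k) (Fin k) R :=
  of fun a b => if (b : ℕ) < j then (∑ t, c t • Y t) a b else Y b a b

theorem exists_det_sum_smul_ne_zero (hY : ∀ t b, b < t → ∀ a, Y t a b = 0)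
    (hdiag : (of fun a b => Y b a b).det ≠ 0) : ∃ c : Fin k → R, (∑ t, c t • Y t).det ≠ 0 := by
  -- Column `b` of `∑ t, c t • Y t` only involves the `c t` with `t ≤ b`, so the coefficients
  -- can be chosen one column at a time.
  suffices ∀ j ≤ k, ∃ c, (mixedCols Y c j).det ≠ 0 by
    obtain ⟨c, hc⟩ := this k le_rfl
    refine ⟨c, ?_⟩
    convert hc using 2
    ext a b
    simp [mixedCols]
  intro j hj
  induction j with
  | zero => exact ⟨0, by simpa [mixedCols] using hdiag⟩
  | succ j ih =>
    obtain ⟨c, hc⟩ := ih (by omega)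
    let i : Fin k := ⟨j, by omega⟩
    obtain ⟨μ, hμ⟩ := exists_det_updateCol_add_smul_ne_zero hc i fun a => (∑ t, c t • Y t) a i
    have hsum : ∑ t, (c + Pi.single i μ : Fin k → R) t • Y t = ∑ t, c t • Y t + μ • Y i := by
      simp [add_smul, sum_add_distrib, Pi.single_apply, ite_smul]
    refine ⟨c + Pi.single i μ, ?_⟩
    convert hμ using 2
    ext a b
    rw [mixedCols, of_apply, hsum]
    rcases lt_trichotomy (b : ℕ) j with hb | hb | hb
    · have : b ≠ i := Fin.ne_of_val_ne hb.ne
      simp [mixedCols, updateCol_ne this, hb, hb.trans j.lt_succ_self, hY i b hb]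
    · have : b = i := Fin.ext hb
      subst this
      simp [mixedCols, hb]
    · have : b ≠ i := Fin.ne_of_val_ne hb.ne'
      simp [mixedCols, updateCol_ne this, Nat.not_le.2 hb, hb.not_gt]

end Determinant

section LeadingCell

variable {K : Type*} [Field K] {m n : Type*} [LinearOrder m] [LinearOrder n]

def IsLeadingCell (M : Matrix m n K) (i : m) (j : n) : Prop :=
  M i j ≠ 0 ∧ (∀ i', ∀ j' < j, M i' j' = 0) ∧ ∀ i' < i, M i' j = 0

variable [Fintype n]

theorem exists_mem_le_rank_of_isLeadingCell (S : Submodule K (Matrix m n K)) {k : ℕ}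
    {row : Fin k → m} {col : Fin k → n} (hrow : Injective row) (hcol : StrictMono col)
    (hlead : ∀ t, ∃ M ∈ S, IsLeadingCell M (row t) (col t)) : ∃ M ∈ S, k ≤ M.rank := by
  choose X hXS hX using hlead
  obtain ⟨c, hc⟩ := exists_det_sum_smul_ne_zero (fun t => (X t).submatrix row col)
    (fun t b hbt a => (hX t).2.1 _ _ (hcol hbt))
    (det_ne_zero_of_blockTriangular (OrderDual.toDual.injective.comp hrow)
      (fun a b hab => (hX b).2.2 _ hab) fun a => (hX a).1)
  refine ⟨∑ t, c t • X t, sum_mem fun t _ => S.smul_mem _ (hXS t), ?_⟩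
  have hsub : ∑ t, c t • (X t).submatrix row col = (∑ t, c t • X t).submatrix row col := by
    ext a b
    simp [sum_apply]
  calc k = ((∑ t, c t • X t).submatrix row col).rank := by
        rw [← hsub, rank_of_isUnit _ ((isUnit_iff_isUnit_det _).2 hc.isUnit), Fintype.card_fin]
    _ ≤ (∑ t, c t • X t).rank := rank_submatrix_le _ _ _

variable [Fintype m]

theorem exists_isLeadingCell {M : Matrix m n K} (hM : M ≠ 0) : ∃ i j, IsLeadingCell M i j := by
  obtain ⟨i₀, j₀, h₀⟩ : ∃ i j, M i j ≠ 0 := by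
    by_contra! h
    exact hM (ext h)
  obtain ⟨j, ⟨i₀, hi₀⟩, hj⟩ := wellFounded_lt.has_min {j | ∃ i, M i j ≠ 0} ⟨j₀, i₀, h₀⟩
  obtain ⟨i, hi, hmin⟩ := wellFounded_lt.has_min {i | M i j ≠ 0} ⟨i₀, hi₀⟩
  exact ⟨i, j, hi, fun i' j' hj' => by_contra fun h => hj j' ⟨i', h⟩ hj',
    fun i' hi' => by_contra fun h => hmin i' h hi'⟩

open Classical in
noncomputable def leadingCells (S : Submodule K (Matrix m n K)) : Finset (m × n) :=
  {c | ∃ M ∈ S, IsLeadingCell M c.1 c.2}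

theorem finrank_le_card_leadingCells (S : Submodule K (Matrix m n K)) :
    finrank K S ≤ #(leadingCells S) := by
  let restrict : S →ₗ[K] (leadingCells S → K) :=
    LinearMap.pi fun c => entryLinearMap K K c.1.1 c.1.2 ∘ₗ S.subtype
  have hinj : Injective restrict := by
    refine (injective_iff_map_eq_zero restrict).2 fun M hM => ?_
    by_contra hM0
    obtain ⟨i, j, hij⟩ := exists_isLeadingCell (Subtype.coe_ne_coe.2 hM0 : (M : Matrix m n K) ≠ 0)
    have hcell : (i, j) ∈ leadingCells S := by
      simp only [leadingCells, mem_filter, mem_univ, true_and]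
      exact ⟨M, M.2, hij⟩
    exact hij.1 (congr_fun hM ⟨(i, j), hcell⟩)
  simpa using LinearMap.finrank_le_finrank_of_injective hinj

theorem exists_mem_le_rank_of_mem_leadingCells (S : Submodule K (Matrix m n K)) {k : ℕ}
    {row : Fin k → m} {col : Fin k → n} (hrow : Injective row) (hcol : Injective col)
    (hcells : ∀ t, (row t, col t) ∈ leadingCells S) : ∃ M ∈ S, k ≤ M.rank := by
  set σ := Tuple.sort col
  refine exists_mem_le_rank_of_isLeadingCell S (hrow.comp σ.injective)
    ((Tuple.monotone_sort col).strictMono_of_injective (hcol.comp σ.injective)) fun t => ?_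
  simpa [leadingCells] using hcells (σ t)

end LeadingCell

end Matrix

namespace Finset

variable {α β : Type*} [Fintype α]

theorem exists_matching_of_card_le_card_biUnion_add [DecidableEq β] (t : α → Finset β) (d : ℕ)
    (hd : ∀ A : Finset α, #A ≤ #(A.biUnion t) + d) :
    ∃ (k : ℕ) (a : Fin k → α) (b : Fin k → β), Injective a ∧ Injective b ∧
      (∀ i, b i ∈ t (a i)) ∧ Fintype.card α ≤ k + d := by
  classical
  -- Hall's theorem, after adding `d` new vertices adjacent to every vertex of `α`
  obtain ⟨f, hf, hft⟩ := (all_card_le_biUnion_card_iff_exists_injective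
    fun x => (t x).disjSum (univ : Finset (Fin d))).1 fun A => by
      rcases A.eq_empty_or_nonempty with rfl | ⟨x₀, hx₀⟩
      · simp
      calc #A ≤ #(A.biUnion t) + d := hd A
        _ = #((A.biUnion t).disjSum (univ : Finset (Fin d))) := by simp [card_disjSum]
        _ ≤ _ := card_le_card fun y hy => ?_
      simp only [mem_biUnion]
      rcases y with y | y
      · obtain ⟨x, hx, hy⟩ := mem_biUnion.1 (inl_mem_disjSum.1 hy)
        exact ⟨x, hx, inl_mem_disjSum.2 hy⟩
      · exact ⟨x₀, hx₀, inr_mem_disjSum.2 (mem_univ y)⟩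
  set s := univ.filter fun x => (f x).isLeft
  let a : Fin #s → α := fun i => s.equivFin.symm i
  have ha : Injective a := Subtype.val_injective.comp s.equivFin.symm.injective
  have hleft : ∀ i, (f (a i)).isLeft := fun i => (mem_filter.1 (s.equivFin.symm i).2).2
  let b : Fin #s → β := fun i => (f (a i)).getLeft (hleft i)
  have hfb : ∀ i, f (a i) = .inl (b i) := fun i => (Sum.inl_getLeft _ _).symm
  refine ⟨#s, a, b, ha, fun i j hij => ha (hf ?_), fun i => ?_, ?_⟩
  · rw [hfb, hfb, hij]
  · simpa [hfb] using hft (a i)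
  · have hright : #sᶜ ≤ d := by
      simpa using card_le_card_of_injOn f (t := univ.map .inr) (fun x hx => by
        cases hfx : f x <;> simp_all [s]) hf.injOn
    rw [card_compl] at hright
    omega

theorem card_le_max_card_mul_of_matching_le [Fintype β] (E : Finset (α × β)) (r : ℕ)
    (hE : ∀ (k : ℕ) (a : Fin k → α) (b : Fin k → β), Injective a → Injective b →
      (∀ i, (a i, b i) ∈ E) → k ≤ r) :
    #E ≤ max (Fintype.card α) (Fintype.card β) * r := by
  classical
  let N : α → Finset β := fun x => {y | (x, y) ∈ E}
  obtain ⟨A, -, hA⟩ := exists_max_image univ (fun A : Finset α => (#A : ℤ) - #(A.biUnion N))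
    univ_nonempty
  have hNA : #(A.biUnion N) ≤ #A := by simpa using hA ∅ (mem_univ _)
  obtain ⟨k, a, b, ha, hb, hab, hk⟩ := exists_matching_of_card_le_card_biUnion_add N
    (#A - #(A.biUnion N)) fun A' => by have := hA A' (mem_univ _); omega
  have hkr : k ≤ r := hE k a b ha hb fun i => by simpa [N] using hab i
  -- König: the rows outside `A` and the columns in `N(A)` cover `E`
  have hcover : E ⊆ A ×ˢ A.biUnion N ∪ Aᶜ ×ˢ univ := by
    rintro ⟨x, y⟩ hxy
    by_cases hx : x ∈ A
    · exact mem_union_left _ (mem_product.2 ⟨hx, mem_biUnion.2 ⟨x, hx, by simpa [N]⟩⟩)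
    · exact mem_union_right _ (mem_product.2 ⟨mem_compl.2 hx, mem_univ y⟩)
  set M := max (Fintype.card α) (Fintype.card β)
  calc #E ≤ #A * #(A.biUnion N) + #Aᶜ * Fintype.card β := by
        simpa using (card_le_card hcover).trans (card_union_le _ _)
    _ ≤ M * #(A.biUnion N) + #Aᶜ * M := by
        gcongr
        exacts [(card_le_univ A).trans (le_max_left _ _), le_max_right _ _]
    _ = M * (#(A.biUnion N) + #Aᶜ) := by ring
    _ ≤ M * r := by
        have := card_le_univ A
        gcongr
        rw [card_compl]
        omega

end Finset

theorem stmt0_general (K : Type*) [Field K] (n p r : ℕ) (hpn : p ≤ n)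
    (S : Submodule K (Matrix (Fin n) (Fin p) K))
    (hS : ∀ M ∈ S, Matrix.rank M ≤ r) :
    Module.finrank K S ≤ n * r := by
  have hmatch : ∀ (k : ℕ) (row : Fin k → Fin n) (col : Fin k → Fin p), Injective row →
      Injective col → (∀ t, (row t, col t) ∈ Matrix.leadingCells S) → k ≤ r := by
    intro k row col hrow hcol hcells
    obtain ⟨M, hMS, hkM⟩ := Matrix.exists_mem_le_rank_of_mem_leadingCells S hrow hcol hcells
    exact hkM.trans (hS M hMS)
  calc finrank K S ≤ #(Matrix.leadingCells S) := Matrix.finrank_le_card_leadingCells S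
    _ ≤ max (Fintype.card (Fin n)) (Fintype.card (Fin p)) * r :=
        card_le_max_card_mul_of_matching_le _ r hmatch
    _ = n * r := by simp [hpn]

/-- Flanders's theorem. -/
theorem stmt0 (K : Type*) [Field K] (n p r : ℕ) (hpn : p ≤ n) (hrp : r ≤ p)
    (S : Submodule K (Matrix (Fin n) (Fin p) K))
    (hS : ∀ M ∈ S, Matrix.rank M ≤ r) :
    Module.finrank K S ≤ n * r :=
  stmt0_general K n p r hpn S hS
end

section
/- Let n ≥ p be non-negative integers and K a field. If N is an n×p matrix over K with rank N < p, then there exists an n×p matrix A such that every matrix in the affine line A + K·N (i.e., A + λN for all λ ∈ K) has rank p. -/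
/-!
Write `f = N : K^p → K^n` in normal form: a basis `v` of `K^p` whose vectors `v_j`, `j ≥ r`, span
the kernel, and a linearly independent family `u` in `K^n` (it has room, as `p ≤ n`) with
`f v_j = u_j` for `j < r`. As the kernel is nonzero, the shift `T : v_j ↦ v_{j+1}` (`j < r`),
`v_j ↦ 0` (`j ≥ r`) is nilpotent, and `f = g ∘ T` for the injective `g` sending `v_{j+1} ↦ u_j`
(`j < r`), `v_0 ↦ u_r` and `v_j ↦ u_j` (`j > r`). Then `g + λ f = g ∘ (1 + λ T)` is injective for
every `λ`, because `1 + λ T` is a unit; `A` is the matrix of `g`.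
-/

open Module LinearMap Submodule

section

variable {K V W : Type*} [Field K] [AddCommGroup V] [Module K V] [AddCommGroup W] [Module K W]

theorem exists_linearIndependent_sumElim [FiniteDimensional K W] {ι : Type*} {a : ι → W}
    (ha : LinearIndependent K a) {d : ℕ} (hd : finrank K (span K (Set.range a)) + d ≤ finrank K W) :
    ∃ w : Fin d → W, LinearIndependent K (Sum.elim a w) := by
  obtain ⟨C, hC⟩ := (span K (Set.range a)).exists_isCompl
  have hdC : d ≤ finrank K C := by have := Submodule.finrank_add_eq_of_isCompl hC; omega
  have hb := ((finBasis K C).linearIndependent.comp _ (Fin.castLE_injective hdC)).map'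
    C.subtype C.ker_subtype
  refine ⟨_, ha.sum_type hb (hC.disjoint.mono_right ?_)⟩
  rw [span_le]
  rintro _ ⟨k, rfl⟩
  exact SetLike.coe_mem _

theorem LinearMap.exists_basis_linearIndependent_apply_eq [FiniteDimensional K V]
    [FiniteDimensional K W] (f : V →ₗ[K] W) (hVW : finrank K V ≤ finrank K W) :
    ∃ (v : Basis (Fin (finrank K (range f) + finrank K (ker f))) K V)
      (u : Fin (finrank K (range f) + finrank K (ker f)) → W), LinearIndependent K u ∧
      ∀ j, f (v j) = if (j : ℕ) < finrank K (range f) then u j else 0 := by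
  obtain ⟨C, hC⟩ := (ker f).exists_isCompl
  have hCr : finrank K C = finrank K (range f) := by
    have := Submodule.finrank_add_eq_of_isCompl hC
    have := f.finrank_range_add_finrank_ker
    omega
  let bC := finBasisOfFinrankEq K C hCr
  let v := ((bC.prod (finBasis K (ker f))).map (C.prodEquivOfIsCompl _ hC.symm)).reindex
    finSumFinEquiv
  have hfC : LinearIndependent K (f ∘ C.subtype ∘ bC) := by
    refine bC.linearIndependent.map' (f ∘ₗ C.subtype) ?_
    rw [ker_comp, ← disjoint_iff_comap_eq_bot]
    exact hC.disjoint.symm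
  have hrange : finrank K (span K (Set.range (f ∘ C.subtype ∘ bC))) + finrank K (ker f) ≤
      finrank K W := by
    rw [finrank_span_eq_card hfC, Fintype.card_fin, f.finrank_range_add_finrank_ker]
    exact hVW
  obtain ⟨w, hw⟩ := exists_linearIndependent_sumElim hfC hrange
  refine ⟨v, Sum.elim _ w ∘ finSumFinEquiv.symm, hw.comp _ finSumFinEquiv.symm.injective,
    fun j => ?_⟩
  induction j using Fin.addCases with
  | left i => simp [v]
  | right k => simp [v]

noncomputable def Module.Basis.shiftUpTo {m : ℕ} (v : Basis (Fin m) K V) (r : ℕ) :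
    Module.End K V :=
  v.constr K fun j => if h : (j : ℕ) < r ∧ (j : ℕ) + 1 < m then v ⟨j + 1, h.2⟩ else 0

theorem Module.Basis.shiftUpTo_apply_of_lt {m r : ℕ} (v : Basis (Fin m) K V) (hr : r < m)
    {j : Fin m} (hj : (j : ℕ) < r) : v.shiftUpTo r (v j) = v ⟨j + 1, by omega⟩ := by
  rw [shiftUpTo, constr_basis, dif_pos ⟨hj, by omega⟩]

theorem Module.Basis.shiftUpTo_apply_of_le {m r : ℕ} (v : Basis (Fin m) K V)
    {j : Fin m} (hj : r ≤ (j : ℕ)) : v.shiftUpTo r (v j) = 0 := by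
  rw [shiftUpTo, constr_basis, dif_neg (by omega)]

theorem Module.Basis.isNilpotent_shiftUpTo {m : ℕ} (v : Basis (Fin m) K V) (r : ℕ) :
    IsNilpotent (v.shiftUpTo r) := by
  have hpow : ∀ k : ℕ, ∀ j : Fin m, m ≤ j + k → (v.shiftUpTo r ^ k) (v j) = 0 := by
    intro k
    induction k with
    | zero => intro j hj; omega
    | succ k ih =>
      intro j hj
      rw [pow_succ, Module.End.mul_apply, shiftUpTo, constr_basis]
      split_ifs with h
      · exact ih _ (by simp only; omega)
      · exact map_zero _
  exact ⟨m, v.ext fun j => hpow m j (by omega)⟩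

theorem LinearMap.exists_injective_comp_isNilpotent_eq {m r : ℕ} (hr : r < m) (f : V →ₗ[K] W)
    (v : Basis (Fin m) K V) {u : Fin m → W} (hu : LinearIndependent K u)
    (hf : ∀ j, f (v j) = if (j : ℕ) < r then u j else 0) :
    ∃ g : V →ₗ[K] W, Function.Injective g ∧ f = g ∘ₗ v.shiftUpTo r := by
  -- `σ` sends `j + 1` to `j` for `j < r` (and `0` to `r`), so that `g (v (j + 1)) = u j = f (v j)`.
  set σ := (Fin.cycleRange (⟨r, hr⟩ : Fin m)).symm
  have hσ : ∀ (j : Fin m) (hj : (j : ℕ) < r), σ ⟨j + 1, by omega⟩ = j := fun j hj =>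
    (Equiv.symm_apply_eq _).mpr (Fin.ext (Fin.coe_cycleRange_of_lt (i := j) hj).symm)
  refine ⟨v.constr K (u ∘ σ), v.injective_constr_of_linearIndependent (hu.comp σ σ.injective),
    v.ext fun j => ?_⟩
  rw [hf, comp_apply]
  split_ifs with hj
  · rw [v.shiftUpTo_apply_of_lt hr hj, v.constr_basis, Function.comp_apply, hσ j hj]
  · rw [v.shiftUpTo_apply_of_le (not_lt.mp hj), map_zero]

theorem LinearMap.injective_add_smul_comp_of_isNilpotent {g : V →ₗ[K] W}
    (hg : Function.Injective g) {T : Module.End K V} (hT : IsNilpotent T) (c : K) :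
    Function.Injective (g + c • g ∘ₗ T) := by
  have hfactor : g + c • g ∘ₗ T = g ∘ₗ (1 + c • T) := by
    rw [comp_add, comp_smul, Module.End.one_eq_id, comp_id]
  rw [hfactor, coe_comp]
  exact hg.comp ((Module.End.isUnit_iff _).mp (hT.smul c).isUnit_one_add).injective

theorem LinearMap.exists_forall_injective_add_smul [FiniteDimensional K V] [FiniteDimensional K W]
    (f : V →ₗ[K] W) (hVW : finrank K V ≤ finrank K W) (hf : ¬Function.Injective f) :
    ∃ g : V →ₗ[K] W, ∀ c : K, Function.Injective (g + c • f) := by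
  obtain ⟨v, u, hu, hvu⟩ := f.exists_basis_linearIndependent_apply_eq hVW
  have hker : 0 < finrank K (ker f) := by
    rwa [Nat.pos_iff_ne_zero, Ne, Submodule.finrank_eq_zero, ker_eq_bot]
  obtain ⟨g, hg, hfg⟩ := exists_injective_comp_isNilpotent_eq (by omega) f v hu hvu
  refine ⟨g, fun c => ?_⟩
  rw [hfg]
  exact injective_add_smul_comp_of_isNilpotent hg (v.isNilpotent_shiftUpTo _) c

end

theorem stmt1 (K : Type*) [Field K] (n p : ℕ) (hpn : p ≤ n)
    (N : Matrix (Fin n) (Fin p) K) (hN : N.rank < p) :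
    ∃ A : Matrix (Fin n) (Fin p) K, ∀ lam : K, (A + lam • N).rank = p := by
  have hNinj : ¬Function.Injective (Matrix.toLin' N) := fun hinj => by
    rw [Matrix.rank, ← Matrix.toLin'_apply', finrank_range_of_inj hinj, finrank_fin_fun] at hN
    exact hN.false
  obtain ⟨g, hg⟩ := (Matrix.toLin' N).exists_forall_injective_add_smul (by simpa using hpn) hNinj
  refine ⟨LinearMap.toMatrix' g, fun lam => ?_⟩
  rw [Matrix.rank, ← Matrix.toLin'_apply', map_add, map_smul, Matrix.toLin'_toMatrix',
    finrank_range_of_inj (hg lam), finrank_fin_fun]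
end

section
/- Let n ≥ 2 and K a field. If N is an n×n matrix over K with rank N < n (i.e., N is singular and possibly zero), then there exists an n×n matrix A such that A + λN is invertible for every λ ∈ K. -/
/-!
Gaussian elimination writes `N = P * diagonal d * Q` with `P`, `Q` invertible, and singularity
of `N` forces some `d j₀ = 0`. If `S` is the permutation matrix of `i ↦ i - 1`, then
`S * diagonal d` is a weighted cyclic shift whose cycle is broken at `j₀`, hence nilpotent.
So `N = U * M * V` with `U = P * S⁻¹`, `V = Q` invertible and `M = S * diagonal d` nilpotent,
and `A = U * V` works because `A + λ • N = U * (1 + λ • M) * V`.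
-/

open Matrix

theorem isUnit_mul_add_smul_mul_mul {R A : Type*} [CommSemiring R] [Ring A] [Algebra R A]
    {u m v : A} (hu : IsUnit u) (hm : IsNilpotent m) (hv : IsUnit v) (c : R) :
    IsUnit (u * v + c • (u * m * v)) := by
  have h : u * v + c • (u * m * v) = u * (1 + c • m) * v := by
    rw [mul_add, add_mul, mul_one, mul_smul_comm, smul_mul_assoc]
  rw [h]
  exact (hu.mul (hm.smul c).isUnit_one_add).mul hv

namespace Matrix

variable {ι R : Type*} [Fintype ι] [DecidableEq ι] [Semiring R]

theorem pow_apply_eq_zero_of_lt_add {M : Matrix ι ι R} (f : ι → ℕ)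
    (hM : ∀ i j, f i ≤ f j → M i j = 0) (k : ℕ) :
    ∀ i j, f i < f j + k → (M ^ k) i j = 0 := by
  induction k with
  | zero =>
    intro i j hij
    rw [pow_zero, one_apply_ne]
    rintro rfl
    omega
  | succ k ih =>
    intro i j hij
    rw [pow_succ, mul_apply]
    refine Finset.sum_eq_zero fun l _ => ?_
    by_cases hlj : f l ≤ f j
    · rw [hM l j hlj, mul_zero]
    · rw [ih i l (by omega), zero_mul]

theorem isNilpotent_of_apply_eq_zero_of_le {m : ℕ} {M : Matrix ι ι R} (f : ι → Fin m)
    (hM : ∀ i j, f i ≤ f j → M i j = 0) : IsNilpotent M :=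
  ⟨m, ext fun i j => pow_apply_eq_zero_of_lt_add (fun i => f i) hM m i j (by omega)⟩

theorem isNilpotent_permMatrix_subRight_one_mul_diagonal {n : ℕ} [NeZero n] {d : Fin n → R}
    {j₀ : Fin n} (hd : d j₀ = 0) :
    IsNilpotent (Equiv.Perm.permMatrix R (Equiv.subRight (1 : Fin n)) * diagonal d) := by
  -- Order the indices cyclically starting just after `j₀`; the shift then strictly increases it.
  refine isNilpotent_of_apply_eq_zero_of_le (fun j => j - j₀ - 1) fun i j hij => ?_
  rw [PEquiv.toMatrix_toPEquiv_mul, submatrix_apply, id, Equiv.subRight_apply, diagonal_apply]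
  split_ifs with hj
  · subst hj
    by_cases hi : i - 1 = j₀
    · rw [hi, hd]
    · have hx : i - 1 - j₀ ≠ 0 := sub_ne_zero.mpr hi
      rw [sub_right_comm i j₀, Fin.le_def, Fin.val_sub_one_of_ne_zero hx] at hij
      have := Fin.val_ne_zero_iff.mpr hx
      omega
  · rfl

theorem exists_eq_zero_of_rank_diagonal_lt {K : Type*} [Field K] {d : ι → K}
    (h : (diagonal d).rank < Fintype.card ι) : ∃ i, d i = 0 := by
  classical
  by_contra! hd
  simp [rank_diagonal, hd] at h

theorem exists_isUnit_isNilpotent_isUnit_eq_mul_mul {K : Type*} [Field K] {n : ℕ}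
    {N : Matrix (Fin n) (Fin n) K} (hN : N.rank < n) :
    ∃ U M V : Matrix (Fin n) (Fin n) K,
      IsUnit U ∧ IsNilpotent M ∧ IsUnit V ∧ N = U * M * V := by
  have : NeZero n := ⟨by omega⟩
  obtain ⟨L, L', d, rfl⟩ := Pivot.exists_list_transvec_mul_diagonal_mul_list_transvec N
  have hL (L : List (TransvectionStruct (Fin n) K)) :
      IsUnit (L.map TransvectionStruct.toMatrix).prod := by
    rw [isUnit_iff_isUnit_det, TransvectionStruct.det_toMatrix_prod]
    exact isUnit_one
  rw [rank_mul_eq_left_of_isUnit_det _ _ ((isUnit_iff_isUnit_det _).mp (hL L')),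
    rank_mul_eq_right_of_isUnit_det _ _ ((isUnit_iff_isUnit_det _).mp (hL L))] at hN
  obtain ⟨j₀, hj₀⟩ :=
    exists_eq_zero_of_rank_diagonal_lt (d := d) (by rwa [Fintype.card_fin])
  set σ : Equiv.Perm (Fin n) := Equiv.subRight 1
  refine ⟨_ * σ⁻¹.permMatrix K, _, _, (hL L).mul ((Group.isUnit σ).map permMatrixHom),
    isNilpotent_permMatrix_subRight_one_mul_diagonal hj₀, hL L', ?_⟩
  rw [Matrix.mul_assoc _ (σ⁻¹.permMatrix K), ← Matrix.mul_assoc (σ⁻¹.permMatrix K),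
    ← permMatrix_mul, mul_inv_cancel, permMatrix_one, Matrix.one_mul]

end Matrix

theorem stmt2_general (K : Type*) [Field K] (n : ℕ)
    (N : Matrix (Fin n) (Fin n) K) (hN : N.rank < n) :
    ∃ A : Matrix (Fin n) (Fin n) K, ∀ lam : K, IsUnit (A + lam • N) := by
  obtain ⟨U, M, V, hU, hM, hV, rfl⟩ := exists_isUnit_isNilpotent_isUnit_eq_mul_mul hN
  exact ⟨U * V, isUnit_mul_add_smul_mul_mul hU hM hV⟩

theorem stmt2 (K : Type*) [Field K] (n : ℕ) (hn : 2 ≤ n)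
    (N : Matrix (Fin n) (Fin n) K) (hN : N.rank < n) :
    ∃ A : Matrix (Fin n) (Fin n) K, ∀ lam : K, IsUnit (A + lam • N) :=
  stmt2_general K n N hN
end

section
/- For every integer n ≥ 2 and every field K, there exist a matrix N ∈ Mat_n(K) of rank n−1 and a linear subspace S of Mat_n(K) of codimension exactly n−1 such that for every A ∈ S some matrix in A + K·N is singular (has rank < n). -/
/-!
Fix indices `k ≠ j`, let `N` be the identity with its `j`-th diagonal entry replaced by `0`, and
let `S` consist of the matrices whose `k`-th column vanishes off the diagonal. For `A ∈ S` the
`k`-th column of `A - A k k • N` is zero, so this matrix is singular; and `S` is cut out by the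
`n - 1` independent linear conditions `A i k = 0`, `i ≠ k`.
-/

section

open Matrix Module LinearMap Fintype

variable {K ι : Type*}

@[simps]
def colOffDiag [Semiring K] (k : ι) : Matrix ι ι K →ₗ[K] ({i // i ≠ k} → K) where
  toFun A i := A i k
  map_add' _ _ := rfl
  map_smul' _ _ := rfl

theorem colOffDiag_surjective [Semiring K] (k : ι) :
    Function.Surjective (colOffDiag (K := K) k) := by
  classical
  exact fun v =>
    ⟨Matrix.of fun i _ => if h : i = k then 0 else v ⟨i, h⟩, funext fun i => dif_neg i.2⟩

variable [Fintype ι] [DecidableEq ι]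

theorem finrank_ker_colOffDiag_add [DivisionRing K] (k : ι) :
    finrank K (ker (colOffDiag (K := K) k)) + (card ι - 1) = card ι * card ι := by
  have h := finrank_range_add_finrank_ker (colOffDiag (K := K) k)
  rw [range_eq_top.mpr (colOffDiag_surjective k), finrank_top, finrank_pi,
    card_subtype_compl, card_subtype_eq, finrank_matrix, finrank_self] at h
  omega

theorem rank_diagonal_update_one_zero [Field K] (j : ι) :
    (diagonal (Function.update (1 : ι → K) j 0)).rank = card ι - 1 := by
  classical
  have hsupp (i : ι) : Function.update (1 : ι → K) j 0 i ≠ 0 ↔ i ≠ j := by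
    rcases eq_or_ne i j with rfl | hij <;> simp [*]
  rw [Matrix.rank_diagonal, card_congr (Equiv.subtypeEquivRight hsupp), card_subtype_compl,
    card_subtype_eq]

theorem det_add_smul_diagonal_update_eq_zero [CommRing K] {A : Matrix ι ι K} {k j : ι}
    (hkj : k ≠ j) (hA : A ∈ ker (colOffDiag k)) :
    (A + (-A k k) • diagonal (Function.update 1 j 0)).det = 0 := by
  refine det_eq_zero_of_column_eq_zero k fun i => ?_
  rcases eq_or_ne i k with rfl | hik
  · simp [Function.update_of_ne hkj]
  · simpa [diagonal_apply_ne _ hik] using congrFun (mem_ker.mp hA) ⟨i, hik⟩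

end

theorem stmt5 (K : Type*) [Field K] (n : ℕ) (hn : 2 ≤ n) :
    ∃ (N : Matrix (Fin n) (Fin n) K) (S : Submodule K (Matrix (Fin n) (Fin n) K)),
      N.rank = n - 1 ∧ Module.finrank K S + (n - 1) = n * n ∧
      ∀ A ∈ S, ∃ lam : K, ¬ IsUnit (A + lam • N) := by
  let k : Fin n := ⟨0, by omega⟩
  let j : Fin n := ⟨1, by omega⟩
  have hkj : k ≠ j := by simp [k, j]
  refine ⟨Matrix.diagonal (Function.update 1 j 0), LinearMap.ker (colOffDiag k), ?_, ?_,
    fun A hA => ⟨-A k k, ?_⟩⟩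
  · simpa using rank_diagonal_update_one_zero (K := K) j
  · simpa using finrank_ker_colOffDiag_add (K := K) k
  · rw [Matrix.isUnit_iff_isUnit_det, det_add_smul_diagonal_update_eq_zero hkj hA]
    exact not_isUnit_zero
end

section
/- Let K = F_2 and let 𝒮 be the affine subspace of Mat_3(K) consisting of matrices M whose (1,3) entry a and (3,2) entry are related by: (3,2)-entry = a + 1. Let N = diag(1,1,0). Then 𝒮 has codimension 1 in Mat_3(K), and there is no M ∈ 𝒮 for which the polynomial det(M + tN) ∈ K[t] is a non-zero constant. -/
/-- The linear form `M ↦ M 2 1 - M 0 2` on 3×3 matrices over `F_2`. -/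
def stmt9Form : Matrix (Fin 3) (Fin 3) (ZMod 2) →ₗ[ZMod 2] ZMod 2 where
  toFun M := M 2 1 - M 0 2
  map_add' := by intros; simp [Matrix.add_apply]; ring
  map_smul' := by intros; simp [Matrix.smul_apply, smul_eq_mul]; ring

open Polynomial in
lemma stmt9_det (M : Matrix (Fin 3) (Fin 3) (ZMod 2)) :
    (M.map Polynomial.C + (Polynomial.X : Polynomial (ZMod 2)) •
      (Matrix.diagonal ![1, 1, 0] : Matrix (Fin 3) (Fin 3) (ZMod 2)).map Polynomial.C).det
    = C (M 0 0 * M 1 1 * M 2 2 - M 0 0 * M 1 2 * M 2 1 - M 0 1 * M 1 0 * M 2 2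
        + M 0 1 * M 1 2 * M 2 0 + M 0 2 * M 1 0 * M 2 1 - M 0 2 * M 1 1 * M 2 0)
      + C (M 1 1 * M 2 2 - M 1 2 * M 2 1 + M 0 0 * M 2 2 - M 0 2 * M 2 0) * X
      + C (M 2 2) * X ^ 2 := by
  simp [Matrix.det_fin_three, Matrix.diagonal, Matrix.map_apply, Matrix.add_apply,
    Matrix.smul_apply, smul_eq_mul]
  ring

lemma stmt9_key : ∀ a b c d e f g h i : ZMod 2, h = c + 1 → i = 0 →
    d*i - f*h + a*i - c*g = 0 →
    a*d*i - a*f*h - b*e*i + b*f*g + c*e*h - c*d*g = 1 → False := by decide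

theorem stmt9 :
    Module.finrank (ZMod 2) (LinearMap.ker stmt9Form) + 1 = 3 * 3 ∧
    ∀ M : Matrix (Fin 3) (Fin 3) (ZMod 2), M 2 1 = M 0 2 + 1 →
      ¬ ∃ c : ZMod 2, c ≠ 0 ∧
        (M.map Polynomial.C + (Polynomial.X : Polynomial (ZMod 2)) •
          (Matrix.diagonal ![1, 1, 0] : Matrix (Fin 3) (Fin 3) (ZMod 2)).map Polynomial.C).det
          = Polynomial.C c := by
  constructor
  · have hsurj : Function.Surjective stmt9Form := by
      intro x
      exact ⟨Matrix.single 2 1 x, by simp [stmt9Form, Matrix.single]⟩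
    have h := LinearMap.finrank_range_add_finrank_ker stmt9Form
    rw [LinearMap.range_eq_top.mpr hsurj] at h
    simp [Module.finrank_matrix] at h
    omega
  · rintro M hM ⟨c, hc, hdet⟩
    rw [stmt9_det] at hdet
    have hc1 : c = 1 := (by decide : ∀ c : ZMod 2, c ≠ 0 → c = 1) c hc
    subst hc1
    have h2 : M 2 2 = 0 := by
      have := congrArg (Polynomial.coeff · 2) hdet
      simpa [Polynomial.coeff_one] using this
    have h1 : M 1 1 * M 2 2 - M 1 2 * M 2 1 + M 0 0 * M 2 2 - M 0 2 * M 2 0 = 0 := by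
      have := congrArg (Polynomial.coeff · 1) hdet
      simpa [Polynomial.coeff_one] using this
    have h0 : M 0 0 * M 1 1 * M 2 2 - M 0 0 * M 1 2 * M 2 1 - M 0 1 * M 1 0 * M 2 2
        + M 0 1 * M 1 2 * M 2 0 + M 0 2 * M 1 0 * M 2 1 - M 0 2 * M 1 1 * M 2 0 = 1 := by
      have := congrArg (Polynomial.coeff · 0) hdet
      simpa [Polynomial.coeff_one] using this
    exact stmt9_key (M 0 0) (M 0 1) (M 0 2) (M 1 1) (M 1 0) (M 1 2) (M 2 0) (M 2 1) (M 2 2)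
      hM h2 (by linear_combination h1) (by linear_combination h0)
end

section
/- Let n > p ≥ 1 and K a field. Write N = [[I_r, 0],[0, 0]] ∈ Mat_{n,p}(K) of rank r < p, where the top-left block is the r×r identity. Then the matrix A = Σ_{j=1}^{p} E_{j+1,j} (the n×p matrix with 1's on the subdiagonal positions (j+1, j) for 1 ≤ j ≤ p) satisfies: A + λN has rank p for every λ ∈ K. -/
theorem stmt11 (K : Type*) [Field K] (n p r : ℕ) (hp : 1 ≤ p) (hnp : p < n) (hr : r < p)
    (N : Matrix (Fin n) (Fin p) K)
    (hN : N = Matrix.of fun (i : Fin n) (j : Fin p) => if (i : ℕ) = (j : ℕ) ∧ (i : ℕ) < r then 1 else 0)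
    (A : Matrix (Fin n) (Fin p) K)
    (hA : A = Matrix.of fun (i : Fin n) (j : Fin p) => if (i : ℕ) = (j : ℕ) + 1 then 1 else 0) :
    ∀ lam : K, (A + lam • N).rank = p := by
  intro lam
  subst hN hA
  set M : Matrix (Fin n) (Fin p) K := _ + _ with hM
  have hf : ∀ k : Fin p, (k : ℕ) + 1 < n := fun k => by omega
  set f : Fin p → Fin n := fun k => ⟨(k : ℕ) + 1, hf k⟩ with hfdef
  set B : Matrix (Fin p) (Fin p) K := M.submatrix f (Equiv.refl (Fin p)) with hB
  have hentry : ∀ i j : Fin p, B i j =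
      (if (i : ℕ) + 1 = (j : ℕ) + 1 then (1 : K) else 0) +
      lam * (if (i : ℕ) + 1 = (j : ℕ) ∧ (i : ℕ) + 1 < r then (1 : K) else 0) := by
    intro i j
    simp [hB, hM, hfdef, Matrix.submatrix, Matrix.add_apply, Matrix.smul_apply, mul_ite]
  have ht : B.BlockTriangular id := by
    intro i j hij
    have hij' : (j : ℕ) < (i : ℕ) := hij
    rw [hentry]
    rw [if_neg (by omega), if_neg (by omega)]
    ring
  have hdet : B.det = 1 := by
    rw [Matrix.det_of_upperTriangular ht]
    have : ∀ i : Fin p, B i i = 1 := by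
      intro i
      rw [hentry, if_pos rfl, if_neg (by omega)]
      ring
    simp [this]
  have hunit : IsUnit B := by
    rw [Matrix.isUnit_iff_isUnit_det, hdet]
    exact isUnit_one
  have hrankB : B.rank = p := by
    rw [Matrix.rank_of_isUnit B hunit, Fintype.card_fin]
  have hle : B.rank ≤ M.rank := by
    rw [Matrix.rank, Matrix.rank, hB, Matrix.mulVecLin_submatrix, LinearMap.range_comp,
      LinearMap.range_comp,
      show LinearMap.funLeft K K (Equiv.refl (Fin p)).symm =
        (LinearEquiv.funCongrLeft K K (Equiv.refl (Fin p)).symm : (Fin p → K) →ₗ[K] (Fin p → K))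
        from rfl,
      LinearEquiv.range, Submodule.map_top]
    exact Submodule.finrank_map_le _ _
  have hge : M.rank ≤ p := by
    simpa using M.rank_le_card_width
  omega
end

section
/- Let K be a field, W and V finite-dimensional K-vector spaces with dim W ≥ 2, and let Ŵ ⊆ L(W, V) be a linear subspace in which every operator has rank at most 1. Assume moreover that no non-zero vector of W is annihilated by all operators in Ŵ. Then there exists a 1-dimensional subspace D of V containing the range of every operator in Ŵ. -/
lemma aux_range_eq_span {K W V : Type*} [Field K] [AddCommGroup W] [Module K W]
    [AddCommGroup V] [Module K V] [FiniteDimensional K V]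
    (f : W →ₗ[K] V) (hf : Module.finrank K (LinearMap.range f) ≤ 1)
    {x : W} (hx : f x ≠ 0) : LinearMap.range f = Submodule.span K {f x} := by
  have hle : Submodule.span K {f x} ≤ LinearMap.range f := by
    rw [Submodule.span_singleton_le_iff_mem]; exact ⟨x, rfl⟩
  have h1 : Module.finrank K (Submodule.span K {f x}) = 1 := finrank_span_singleton hx
  exact (Submodule.eq_of_le_of_finrank_le hle (by omega)).symm

lemma aux_ker_le {K W V : Type*} [Field K] [AddCommGroup W] [Module K W]
    [AddCommGroup V] [Module K V] [FiniteDimensional K V]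
    (f g : W →ₗ[K] V)
    (hf : Module.finrank K (LinearMap.range f) ≤ 1)
    (hg : Module.finrank K (LinearMap.range g) ≤ 1)
    (hfg : Module.finrank K (LinearMap.range (f + g)) ≤ 1)
    {x u : W} (hx : f x ≠ 0) (hu : g u ∉ Submodule.span K {f x}) :
    LinearMap.ker f ≤ LinearMap.ker g := by
  intro w hw
  rw [LinearMap.mem_ker] at hw ⊢
  by_contra hgw
  have hrg : LinearMap.range g = Submodule.span K {g w} := aux_range_eq_span g hg hgw
  have hsumw : (f + g) w = g w := by simp [hw]
  have hrfg : LinearMap.range (f + g) = Submodule.span K {g w} := by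
    have := aux_range_eq_span (f + g) hfg (x := w) (by rw [hsumw]; exact hgw)
    rwa [hsumw] at this
  have hfx : f x ∈ Submodule.span K {g w} := by
    have h1 : (f + g) x ∈ Submodule.span K {g w} := hrfg ▸ LinearMap.mem_range_self _ x
    have h2 : g x ∈ Submodule.span K {g w} := hrg ▸ LinearMap.mem_range_self _ x
    have : f x = (f + g) x - g x := by simp
    rw [this]; exact Submodule.sub_mem _ h1 h2
  obtain ⟨c, hc⟩ := Submodule.mem_span_singleton.mp hfx
  have hc0 : c ≠ 0 := by rintro rfl; simp at hc; exact hx hc.symm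
  have hgwfx : g w ∈ Submodule.span K {f x} := by
    rw [Submodule.mem_span_singleton]
    exact ⟨c⁻¹, by rw [← hc, smul_smul, inv_mul_cancel₀ hc0, one_smul]⟩
  have : g u ∈ Submodule.span K {f x} := by
    have : g u ∈ Submodule.span K {g w} := hrg ▸ LinearMap.mem_range_self _ u
    exact (Submodule.span_singleton_le_iff_mem _ _).mpr hgwfx this
  exact hu this

theorem stmt14 (K W V : Type*) [Field K] [AddCommGroup W] [Module K W]
    [AddCommGroup V] [Module K V] [FiniteDimensional K W] [FiniteDimensional K V]
    (hW : 2 ≤ Module.finrank K W)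
    (Shat : Submodule K (W →ₗ[K] V))
    (hrank : ∀ f ∈ Shat, Module.finrank K (LinearMap.range f) ≤ 1)
    (hker : ∀ w : W, w ≠ 0 → ∃ f ∈ Shat, f w ≠ 0) :
    ∃ D : Submodule K V, Module.finrank K D = 1 ∧
      ∀ f ∈ Shat, LinearMap.range f ≤ D := by
  have hWnt : Nontrivial W := Module.nontrivial_of_finrank_pos (R := K) (by omega)
  obtain ⟨w0, hw0⟩ := exists_ne (0 : W)
  obtain ⟨f0, hf0S, hf0⟩ := hker w0 hw0
  refine ⟨Submodule.span K {f0 w0}, finrank_span_singleton hf0, ?_⟩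
  intro g hgS
  by_contra hcon
  rw [SetLike.not_le_iff_exists] at hcon
  obtain ⟨y, hyr, hy⟩ := hcon
  obtain ⟨u, rfl⟩ := hyr
  have hgu0 : g u ≠ 0 := fun h => hy (h ▸ Submodule.zero_mem _)
  -- kernel of f0 is contained in kernel of g
  have hk1 : LinearMap.ker f0 ≤ LinearMap.ker g :=
    aux_ker_le f0 g (hrank f0 hf0S) (hrank g hgS)
      (hrank _ (Shat.add_mem hf0S hgS)) hf0 hy
  -- ker f0 is nontrivial
  have hkerpos : 0 < Module.finrank K (LinearMap.ker f0) := by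
    have := LinearMap.finrank_range_add_finrank_ker f0
    have hr := hrank f0 hf0S
    omega
  have : Nontrivial (LinearMap.ker f0) := Module.finrank_pos_iff.mp hkerpos
  obtain ⟨⟨h, hhm⟩, hne⟩ := exists_ne (0 : LinearMap.ker f0)
  have hh0 : h ≠ 0 := fun e => hne (Subtype.ext e)
  obtain ⟨p, hpS, hph⟩ := hker h hh0
  by_cases hc : p h ∈ Submodule.span K {f0 w0}
  · -- then p h ∉ span {g u}
    have hc2 : p h ∉ Submodule.span K {g u} := by
      intro hmem
      obtain ⟨a, ha⟩ := Submodule.mem_span_singleton.mp hc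
      obtain ⟨b, hb⟩ := Submodule.mem_span_singleton.mp hmem
      have hb0 : b ≠ 0 := by rintro rfl; simp at hb; exact hph hb.symm
      apply hy
      rw [Submodule.mem_span_singleton]
      exact ⟨b⁻¹ * a, by rw [mul_smul, ha, ← hb, smul_smul, inv_mul_cancel₀ hb0, one_smul]⟩
    have hk2 : LinearMap.ker g ≤ LinearMap.ker p :=
      aux_ker_le g p (hrank g hgS) (hrank p hpS)
        (hrank _ (Shat.add_mem hgS hpS)) hgu0 hc2
    exact hph (hk2 (hk1 hhm))
  · have hk2 : LinearMap.ker f0 ≤ LinearMap.ker p :=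
      aux_ker_le f0 p (hrank f0 hf0S) (hrank p hpS)
        (hrank _ (Shat.add_mem hf0S hpS)) hf0 hc
    exact hph (hk2 hhm)
end

section
/- Let K be a field, n ≥ 1, and let N, A ∈ Mat_n(K) with rank N = n − 1. If det(A + tN), viewed as a formal polynomial in K[t], is a non-zero constant, then the matrix pencil A + tN is equivalent to the pencil I_n + tJ, where J = (δ_{i,j−1}) is the nilpotent Jordan block; i.e., there exist P, Q ∈ GL_n(K) with P(A + tN)Q = I_n + tJ as pencils (PAQ = I_n and PNQ = J). -/
/-!
Evaluating at `t = 0` shows `det A = c ≠ 0`, and then `det (1 + t M) = 1` for `M = A⁻¹ N`. This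
says that the reversed characteristic polynomial of `-M` is `1`, so its characteristic polynomial
is `tⁿ` and `M` is nilpotent by Cayley–Hamilton. Since `M` has rank `n - 1`, its kernel is a line
and `dim ker Mᵏ ≤ k`, so `Mⁿ⁻¹ ≠ 0`. For `v` with `Mⁿ⁻¹ v ≠ 0` the vectors `Mⁿ⁻¹ v, …, M v, v` form
a basis in which `M` acts as `J`; if `Q` has them as columns, `P = Q⁻¹ A⁻¹` does the job.
-/

open Matrix Polynomial Module LinearMap

section Endomorphism

variable {K V W U : Type*} [Field K] [AddCommGroup V] [Module K V] [AddCommGroup W] [Module K W]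
  [AddCommGroup U] [Module K U]

theorem LinearMap.finrank_ker_comp_le [FiniteDimensional K V] [FiniteDimensional K W]
    (f : W →ₗ[K] U) (g : V →ₗ[K] W) :
    finrank K (ker (f ∘ₗ g)) ≤ finrank K (ker g) + finrank K (ker f) := by
  let h : ker (f ∘ₗ g) →ₗ[K] ker f := g.restrict fun x hx => by simpa using hx
  have hrange : finrank K (range h) ≤ finrank K (ker f) := Submodule.finrank_le _
  have hker : finrank K (ker h) ≤ finrank K (ker g) := by
    rw [← Submodule.finrank_map_subtype_eq]
    refine Submodule.finrank_mono ?_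
    rintro _ ⟨x, hx, rfl⟩
    exact congrArg Subtype.val hx
  have := h.finrank_range_add_finrank_ker
  omega

theorem Module.End.finrank_ker_pow_le [FiniteDimensional K V] (f : End K V) (k : ℕ) :
    finrank K (ker (f ^ k)) ≤ k * finrank K (ker f) := by
  induction k with
  | zero => simp [Module.End.one_eq_id]
  | succ k ih =>
    rw [pow_succ, Module.End.mul_eq_comp, add_one_mul]
    have := finrank_ker_comp_le (f ^ k) f
    omega

theorem Module.End.pow_ne_zero_of_finrank_ker_le_one [FiniteDimensional K V] {f : End K V}
    (hf : finrank K (ker f) ≤ 1) {k : ℕ} (hk : k < finrank K V) : f ^ k ≠ 0 := by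
  intro h
  have := f.finrank_ker_pow_le k
  rw [h, ker_zero, finrank_top] at this
  have := Nat.mul_le_mul_left k hf
  omega

theorem Module.End.linearIndependent_pow_apply (f : End K V) {v : V} {k : ℕ} (hk : (f ^ k) v ≠ 0)
    (hk' : (f ^ (k + 1)) v = 0) :
    LinearIndependent K fun i : Fin (k + 1) => (f ^ (i : ℕ)) v := by
  induction k generalizing v with
  | zero => simpa [linearIndependent_unique_iff] using hk
  | succ k ih =>
    have hcons : (fun i : Fin (k + 2) => (f ^ (i : ℕ)) v) =
        Fin.cons v fun i : Fin (k + 1) => (f ^ (i : ℕ)) (f v) := by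
      ext i
      refine Fin.cases ?_ (fun i => ?_) i <;> simp [pow_succ]
    rw [hcons, linearIndependent_finCons]
    refine ⟨ih (by rwa [← mul_apply, ← pow_succ]) (by rwa [← mul_apply, ← pow_succ]),
      fun hv => hk ?_⟩
    -- `f ^ (k + 1)` kills every `f ^ (i + 1) v` but not `v`.
    refine (Submodule.span_le.2 ?_ hv : v ∈ ker (f ^ (k + 1)))
    rintro _ ⟨i, rfl⟩
    rw [SetLike.mem_coe, mem_ker, ← mul_apply, ← mul_apply, mul_assoc, ← pow_succ, ← pow_add]
    exact Module.End.pow_map_zero_of_le (by omega) hk'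

end Endomorphism

section Pencil

variable {ι R : Type*} [Fintype ι] [DecidableEq ι] [CommRing R]

theorem Matrix.eval_zero_det_map_C_add_X_smul (A B : Matrix ι ι R) :
    eval 0 (A.map C + (X : R[X]) • B.map C).det = A.det := by
  rw [← coe_evalRingHom, RingHom.map_det]
  congr
  ext i j
  simp

theorem Matrix.det_map_C_add_X_smul_eq {A : Matrix ι ι R} (hA : IsUnit A.det)
    (B : Matrix ι ι R) :
    (A.map C + (X : R[X]) • B.map C).det = C A.det * (1 + (X : R[X]) • (A⁻¹ * B).map C).det := by
  have hfactor :
      A.map C + (X : R[X]) • B.map C = A.map C * (1 + (X : R[X]) • (A⁻¹ * B).map C) := by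
    rw [mul_add, mul_one, Matrix.mul_smul, ← Matrix.map_mul, mul_nonsing_inv_cancel_left _ _ hA]
  rw [hfactor, det_mul, ← RingHom.mapMatrix_apply, ← RingHom.map_det]

theorem Matrix.pow_card_eq_zero_of_det_one_add_X_smul {M : Matrix ι ι R}
    (h : (1 + (X : R[X]) • M.map C).det = 1) : M ^ Fintype.card ι = 0 := by
  nontriviality R
  have hrev : (-M).charpolyRev = 1 := by
    rw [charpolyRev, ← h]
    congr 1
    ext i j
    simp [sub_eq_add_neg]
  have hchar : (-M).charpoly = X ^ Fintype.card ι := by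
    have hreflect : (-M).charpoly.reflect (Fintype.card ι) = 1 := by
      rw [← charpoly_natDegree_eq_dim (-M), ← reverse, reverse_charpoly, hrev]
    rw [← reflect_one, ← hreflect, reflect_reflect]
  have := aeval_self_charpoly (-M)
  rwa [hchar, map_pow, aeval_X, neg_pow, (isUnit_one.neg.pow _).mul_right_eq_zero] at this

end Pencil

def Matrix.nilpotentJordanBlock (R : Type*) [Zero R] [One R] (n : ℕ) : Matrix (Fin n) (Fin n) R :=
  of fun i j => if (j : ℕ) = i + 1 then 1 else 0

section JordanBlock

variable {m R : Type*} [NonAssocSemiring R] {n : ℕ}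

theorem Matrix.mul_nilpotentJordanBlock_apply_zero (B : Matrix m (Fin (n + 1)) R) (i : m) :
    (B * nilpotentJordanBlock R (n + 1)) i 0 = 0 := by
  simp [mul_apply, nilpotentJordanBlock]

theorem Matrix.mul_nilpotentJordanBlock_apply_succ (B : Matrix m (Fin (n + 1)) R) (i : m)
    (j : Fin n) : (B * nilpotentJordanBlock R (n + 1)) i j.succ = B i j.castSucc := by
  rw [mul_apply, Finset.sum_eq_single j.castSucc]
  · simp [nilpotentJordanBlock]
  · intro k _ hk
    simp [nilpotentJordanBlock, Fin.ext_iff] at hk ⊢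
    omega
  · simp

end JordanBlock

theorem Matrix.exists_isUnit_mul_eq_mul_nilpotentJordanBlock {K : Type*} [Field K] {n : ℕ}
    {M : Matrix (Fin (n + 1)) (Fin (n + 1)) K} (hM : M ^ (n + 1) = 0) (hr : M.rank = n) :
    ∃ Q : Matrix (Fin (n + 1)) (Fin (n + 1)) K,
      IsUnit Q ∧ M * Q = Q * nilpotentJordanBlock K (n + 1) := by
  have hker : finrank K (ker (toLin' M)) ≤ 1 := by
    have := (toLin' M).finrank_range_add_finrank_ker
    rw [rank, ← toLin'_apply'] at hr
    rw [finrank_fin_fun] at this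
    omega
  obtain ⟨v, hv⟩ : ∃ v, M ^ n *ᵥ v ≠ 0 := by
    by_contra! h
    refine Module.End.pow_ne_zero_of_finrank_ker_le_one hker (k := n) (by simp) ?_
    refine LinearMap.ext fun v => ?_
    rw [← toLin'_pow, toLin'_apply, h, LinearMap.zero_apply]
  have hli := (Module.End.linearIndependent_pow_apply (toLin' M) (k := n) (v := v)
    (by rwa [← toLin'_pow, toLin'_apply]) (by rw [← toLin'_pow, toLin'_apply, hM, zero_mulVec]))
  let Q : Matrix (Fin (n + 1)) (Fin (n + 1)) K := of fun i j => (M ^ (j.rev : ℕ) *ᵥ v) i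
  have hMQ : ∀ i j, (M * Q) i j = (M ^ ((j.rev : ℕ) + 1) *ᵥ v) i := by
    intro i j
    rw [pow_succ', ← mulVec_mulVec]
    rfl
  refine ⟨Q, ?_, ?_⟩
  · have hcols : Q.col = (fun i : Fin (n + 1) => (toLin' M ^ (i : ℕ)) v) ∘ Fin.rev := by
      ext j i
      simp [Q, ← toLin'_pow]
    rw [← linearIndependent_cols_iff_isUnit, hcols]
    exact hli.comp Fin.rev Fin.rev_injective
  · ext i j
    refine Fin.cases ?_ (fun j => ?_) j
    · rw [hMQ, mul_nilpotentJordanBlock_apply_zero]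
      simp [hM]
    · have hrev : (j.succ.rev : ℕ) + 1 = j.castSucc.rev := by simp; omega
      rw [hMQ, mul_nilpotentJordanBlock_apply_succ, hrev]
      rfl

theorem stmt18_general (K : Type*) [Field K] (n : ℕ)
    (N A : Matrix (Fin n) (Fin n) K) (hN : N.rank = n - 1)
    (c : K) (hc : c ≠ 0)
    (hdet : (A.map Polynomial.C + (Polynomial.X : Polynomial K) • N.map Polynomial.C).det = Polynomial.C c) :
    ∃ P Q : Matrix (Fin n) (Fin n) K, IsUnit P ∧ IsUnit Q ∧
      P * A * Q = 1 ∧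
      P * N * Q = Matrix.of fun i j : Fin n => if (j : ℕ) = (i : ℕ) + 1 then 1 else 0 := by
  obtain _ | n := n
  · exact ⟨1, 1, isUnit_one, isUnit_one, Subsingleton.elim _ _, Subsingleton.elim _ _⟩
  have hAc : A.det = c := by
    rw [← eval_zero_det_map_C_add_X_smul A N, hdet, eval_C]
  have hA : IsUnit A.det := hAc ▸ hc.isUnit
  have hpencil : (1 + (X : K[X]) • (A⁻¹ * N).map C).det = 1 := by
    rw [det_map_C_add_X_smul_eq hA, hAc] at hdet
    exact mul_left_cancel₀ (C_ne_zero.2 hc) (hdet.trans (mul_one _).symm)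
  have hnil : (A⁻¹ * N) ^ (n + 1) = 0 := by
    simpa using pow_card_eq_zero_of_det_one_add_X_smul hpencil
  have hrank : (A⁻¹ * N).rank = n := by
    rw [rank_mul_eq_right_of_isUnit_det _ _ (isUnit_nonsing_inv_det A hA), hN, Nat.add_sub_cancel]
  obtain ⟨Q, hQ, hMQ⟩ := exists_isUnit_mul_eq_mul_nilpotentJordanBlock hnil hrank
  have hQ' : IsUnit Q.det := (isUnit_iff_isUnit_det Q).1 hQ
  have hPunit : IsUnit (Q⁻¹ * A⁻¹) :=
    (isUnit_nonsing_inv_iff.2 hQ).mul (isUnit_nonsing_inv_iff.2 ((isUnit_iff_isUnit_det A).2 hA))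
  refine ⟨Q⁻¹ * A⁻¹, Q, hPunit, hQ, ?_, ?_⟩
  · rw [mul_assoc Q⁻¹, nonsing_inv_mul A hA, mul_one, nonsing_inv_mul Q hQ']
  · rw [mul_assoc Q⁻¹, mul_assoc, mul_assoc, ← mul_assoc A⁻¹, hMQ,
      nonsing_inv_mul_cancel_left _ _ hQ']
    rfl

theorem stmt18 (K : Type*) [Field K] (n : ℕ) (hn : 1 ≤ n)
    (N A : Matrix (Fin n) (Fin n) K) (hN : N.rank = n - 1)
    (c : K) (hc : c ≠ 0)
    (hdet : (A.map Polynomial.C + (Polynomial.X : Polynomial K) • N.map Polynomial.C).det = Polynomial.C c) :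
    ∃ P Q : Matrix (Fin n) (Fin n) K, IsUnit P ∧ IsUnit Q ∧
      P * A * Q = 1 ∧
      P * N * Q = Matrix.of fun i j : Fin n => if (j : ℕ) = (i : ℕ) + 1 then 1 else 0 :=
  stmt18_general K n N A hN c hc hdet
end

section
/- Let K be a field, U and V finite-dimensional K-vector spaces, S a linear subspace of L(U,V), and y ∈ V non-zero. Let π_y: V → V/Ky be the canonical projection and S mod y := {π_y ∘ s : s ∈ S} ⊆ L(U, V/Ky). Then codim S − codim(S mod y) = dim U − dim{s ∈ S : Im s ⊆ Ky}. In particular, if codim(S mod y) ≥ codim S, then S contains every operator in L(U,V) with range contained in Ky. -/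
set_option synthInstance.maxHeartbeats 800000
set_option maxHeartbeats 1600000


theorem stmt19 (K U V : Type*) [Field K] [AddCommGroup U] [Module K U]
    [AddCommGroup V] [Module K V] [FiniteDimensional K U] [FiniteDimensional K V]
    (S : Submodule K (U →ₗ[K] V)) (y : V) (hy : y ≠ 0) :
    let Φ : (U →ₗ[K] V) →ₗ[K] (U →ₗ[K] V ⧸ (K ∙ y)) :=
      (LinearMap.llcomp K U V (V ⧸ (K ∙ y))) (K ∙ y).mkQ
    (Module.finrank K S =
        Module.finrank K (S.map Φ) + Module.finrank K (S ⊓ LinearMap.ker Φ : Submodule K (U →ₗ[K] V))) ∧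
    ((Module.finrank K U * Module.finrank K V - Module.finrank K S ≤
        Module.finrank K U * Module.finrank K (V ⧸ (K ∙ y)) - Module.finrank K (S.map Φ)) →
      ∀ s : U →ₗ[K] V, LinearMap.range s ≤ (K ∙ y) → s ∈ S) := by
  intro Φ
  -- part 1 : rank-nullity for Φ restricted to S
  have h1 := LinearMap.finrank_range_add_finrank_ker (Φ.domRestrict S)
  rw [LinearMap.range_domRestrict, LinearMap.ker_domRestrict] at h1
  have hcom : Submodule.comap S.subtype (LinearMap.ker Φ)
      = Submodule.comap S.subtype (S ⊓ LinearMap.ker Φ) := by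
    rw [Submodule.comap_inf]
    simp
  have e2 : Module.finrank K (Submodule.comap S.subtype (S ⊓ LinearMap.ker Φ)) =
      Module.finrank K (S ⊓ LinearMap.ker Φ : Submodule K (U →ₗ[K] V)) :=
    (Submodule.comapSubtypeEquivOfLe (inf_le_left : S ⊓ LinearMap.ker Φ ≤ S)).finrank_eq
  rw [hcom, e2] at h1
  have part1 : Module.finrank K S =
      Module.finrank K (S.map Φ) +
      Module.finrank K (S ⊓ LinearMap.ker Φ : Submodule K (U →ₗ[K] V)) := h1.symm
  refine ⟨part1, ?_⟩
  intro h s hs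
  -- Φ is surjective
  have hmkQsurj : Function.Surjective (K ∙ y).mkQ := Submodule.mkQ_surjective _
  obtain ⟨g, hg⟩ := (K ∙ y).mkQ.exists_rightInverse_of_surjective
    (by rw [Submodule.range_mkQ])
  have hsurj : Function.Surjective Φ := by
    intro t
    refine ⟨g.comp t, ?_⟩
    show ((K ∙ y).mkQ.comp (g.comp t)) = t
    rw [← LinearMap.comp_assoc, hg, LinearMap.id_comp]
  have hq : Module.finrank K (V ⧸ (K ∙ y)) + 1 = Module.finrank K V := by
    have h2 := Submodule.finrank_quotient_add_finrank (K ∙ y)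
    rwa [finrank_span_singleton hy] at h2
  have hker : Module.finrank K (LinearMap.ker Φ)
      = Module.finrank K U := by
    have h3 := LinearMap.finrank_range_add_finrank_ker Φ
    rw [LinearMap.range_eq_top.2 hsurj, finrank_top] at h3
    rw [Module.finrank_linearMap, Module.finrank_linearMap, ← hq, Nat.mul_add,
      Nat.mul_one] at h3
    omega
  -- membership in ker Φ characterization
  have hmem : ∀ t : U →ₗ[K] V, t ∈ LinearMap.ker Φ ↔ LinearMap.range t ≤ (K ∙ y) := by
    intro t
    rw [LinearMap.mem_ker]
    show (K ∙ y).mkQ.comp t = 0 ↔ _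
    rw [← LinearMap.range_le_ker_iff, Submodule.ker_mkQ]
  -- dimension bounds
  have hmaple : Module.finrank K (S.map Φ) ≤
      Module.finrank K U * Module.finrank K (V ⧸ (K ∙ y)) := by
    have := Submodule.finrank_le (S.map Φ)
    rwa [Module.finrank_linearMap] at this
  have hSle : Module.finrank K S ≤ Module.finrank K U * Module.finrank K V := by
    have := Submodule.finrank_le S
    rwa [Module.finrank_linearMap] at this
  have hinfle : Module.finrank K (S ⊓ LinearMap.ker Φ : Submodule K (U →ₗ[K] V))
      ≤ Module.finrank K U := by
    rw [← hker]
    exact Submodule.finrank_mono inf_le_right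
  have htot : Module.finrank K U * Module.finrank K V
      = Module.finrank K U * Module.finrank K (V ⧸ (K ∙ y)) + Module.finrank K U := by
    rw [← hq, Nat.mul_add, Nat.mul_one]
  have hge : Module.finrank K U ≤
      Module.finrank K (S ⊓ LinearMap.ker Φ : Submodule K (U →ₗ[K] V)) := by omega
  have heq : (S ⊓ LinearMap.ker Φ : Submodule K (U →ₗ[K] V)) = LinearMap.ker Φ := by
    apply Submodule.eq_of_le_of_finrank_le inf_le_right
    omega
  have : s ∈ LinearMap.ker Φ := (hmem s).2 hs
  rw [← heq] at this
  exact this.1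
end
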